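/- Let N_g ≥ 4N_c+1 and s > 3/2, and let V ∈ H^s_#(Γ). Then ‖Π_{2N_c}(I_{N_g}(V))‖_{L²_#} ≤ (∫_Γ I_{N_g}(|V|²))^{1/2}. -/

import Mathlib

open MeasureTheory

noncomputable section

namespace TFW

/-- squared euclidean norm of an integer wavevector index -/
def zsq (n : Fin 3 → ℤ) : ℝ := ∑ i, ((n i : ℝ))^2

/-- norm of the wavevector k = (2π/L) n -/
def knorm (L : ℝ) (n : Fin 3 → ℤ) : ℝ := (2 * Real.pi / L) * Real.sqrt (zsq n)

/-- Sobolev weight (1+|k|²)^s -/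
def sobW (L s : ℝ) (n : Fin 3 → ℤ) : ℝ := (1 + (knorm L n)^2) ^ s

/-- H^s norm from Fourier coefficients -/
def Hnorm (L s : ℝ) (c : (Fin 3 → ℤ) → ℂ) : ℝ :=
  Real.sqrt (∑' n : Fin 3 → ℤ, sobW L s n * ‖c n‖^2)

/-- Fourier truncation to |k| ≤ 2πN_c/L -/
def trunc (L : ℝ) (Nc : ℕ) (c : (Fin 3 → ℤ) → ℂ) : (Fin 3 → ℤ) → ℂ :=
  fun n => if knorm L n ≤ 2 * Real.pi * Nc / L then c n else 0

/-- the planewave e_k, k = (2π/L)n -/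
def ek (L : ℝ) (n : Fin 3 → ℤ) (x : Fin 3 → ℝ) : ℂ :=
  (((L ^ 3 : ℝ) ^ (-(1/2 : ℝ)) : ℝ) : ℂ) *
    Complex.exp (Complex.I * ((2 * Real.pi / L : ℝ) : ℂ) * ∑ i, (n i : ℂ) * (x i : ℂ))

/-- function with Fourier coefficients c -/
def fromCoeff (L : ℝ) (c : (Fin 3 → ℤ) → ℂ) (x : Fin 3 → ℝ) : ℂ :=
  ∑' n : Fin 3 → ℤ, c n * ek L n x

/-- the simulation cell Γ = [0,L)³ -/
def Gam (L : ℝ) : Set (Fin 3 → ℝ) := Set.univ.pi fun _ => Set.Ico 0 L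

/-- point of the cartesian grid G_{N_g} in Γ -/
def gridPt (L : ℝ) (Ng : ℕ) (m : Fin 3 → Fin Ng) : Fin 3 → ℝ :=
  fun i => (L / Ng) * (m i : ℝ)

/-- discrete Fourier transform on the grid -/
def dft (L : ℝ) (Ng : ℕ) (φ : (Fin 3 → ℝ) → ℂ) (n : Fin 3 → ℤ) : ℂ :=
  ((Ng : ℂ) ^ 3)⁻¹ * ∑ m : Fin 3 → Fin Ng, φ (gridPt L Ng m) *
    Complex.exp (-(Complex.I * ((2 * Real.pi / L : ℝ) : ℂ) *
      ∑ i, (n i : ℂ) * ((gridPt L Ng m i : ℝ) : ℂ)))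

/-- cube of integer vectors with entries in [-R,R] -/
def cube (R : ℤ) : Finset (Fin 3 → ℤ) := Fintype.piFinset fun _ => Finset.Icc (-R) R

/-- wavevector indices with |k| ≤ 2πN/L -/
def ball (L : ℝ) (N : ℕ) : Finset (Fin 3 → ℤ) :=
  (cube N).filter fun n => knorm L n ≤ 2 * Real.pi * N / L

/-- modes used by the interpolation operator (N_g odd) -/
def interpModes (Ng : ℕ) : Finset (Fin 3 → ℤ) := cube (((Ng : ℤ) - 1) / 2)

/-- interpolation operator I_{N_g} (for N_g odd) -/
def interp (L : ℝ) (Ng : ℕ) (φ : (Fin 3 → ℝ) → ℂ) (x : Fin 3 → ℝ) : ℂ :=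
  (((L ^ 3 : ℝ) ^ ((1/2 : ℝ)) : ℝ) : ℂ) * ∑ n ∈ interpModes Ng, dft L Ng φ n * ek L n x

/-- truncated interpolant Π_{2N_c}(I_{N_g} φ) (valid when N_g ≥ 4N_c+1, N_g odd) -/
def truncInterp (L : ℝ) (Ng Nc : ℕ) (φ : (Fin 3 → ℝ) → ℂ) (x : Fin 3 → ℝ) : ℂ :=
  (((L ^ 3 : ℝ) ^ ((1/2 : ℝ)) : ℝ) : ℂ) * ∑ n ∈ ball L (2 * Nc), dft L Ng φ n * ek L n x

/-- Fourier coefficient of a function on Γ -/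
def fCoeff (L : ℝ) (f : (Fin 3 → ℝ) → ℂ) (n : Fin 3 → ℤ) : ℂ :=
  ∫ x in Gam L, f x * (starRingEnd ℂ) (ek L n x)

/-- periodic Coulomb bilinear form from Fourier coefficients -/
def DGam (L : ℝ) (c d : (Fin 3 → ℤ) → ℂ) : ℂ :=
  ((4 * Real.pi : ℝ) : ℂ) * ∑' n : Fin 3 → ℤ,
    if n = 0 then 0 else ((((knorm L n) ^ 2)⁻¹ : ℝ) : ℂ) * (starRingEnd ℂ) (c n) * d n

end TFW

/-!
Expand both sides in the discrete Fourier coefficients `c n = dft L Ng V n`. Orthonormality of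
the plane waves `ek L n` on `Γ` gives `‖Π_{2N_c} I_{N_g} V‖² = L³ ∑_{n ∈ ball} |c n|²`, and only
the constant mode survives in `∫_Γ I_{N_g}(V²) = L³ · N_g⁻³ ∑_x V(x)²`. Since `N_g > 4 N_c`, the
modes of the ball are pairwise distinct modulo `N_g`, so the sampled waves
`m ↦ N_g^{-3/2} e^{2πi n·m/N_g}` are orthonormal in `ℓ²` of the grid, and Bessel's inequality
compares the two sides.
-/

open Complex Finset
open scoped Real ComplexConjugate

theorem setIntegral_univ_pi_prod {ι : Type*} [Fintype ι] {E : ι → Type*}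
    [∀ i, MeasureSpace (E i)] [∀ i, SigmaFinite (volume : Measure (E i))] {𝕜 : Type*} [RCLike 𝕜]
    (s : (i : ι) → Set (E i)) (f : (i : ι) → E i → 𝕜) :
    ∫ x in Set.univ.pi s, ∏ i, f i (x i) = ∏ i, ∫ t in s i, f i t := by
  rw [volume_pi, Measure.restrict_pi_pi, integral_fintype_prod_eq_prod]

theorem integral_Ico_exp_eq_ite {L : ℝ} (hL : 0 < L) (a : ℤ) :
    ∫ t in Set.Ico 0 L, exp (2 * π * I * a * t / L) = if a = 0 then (L : ℂ) else 0 := by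
  rw [integral_Ico_eq_integral_Ioc, ← intervalIntegral.integral_of_le hL.le]
  split_ifs with ha
  · simp [ha]
  have hc : 2 * π * I * a / L ≠ 0 := by
    simp [ha, hL.ne', Real.pi_ne_zero, I_ne_zero]
  simp_rw [show ∀ t : ℝ, 2 * π * I * a * t / L = 2 * π * I * a / L * t from fun t => by ring]
  rw [integral_exp_mul_complex hc, ofReal_zero, mul_zero, exp_zero,
    show 2 * π * I * a / L * L = a * (2 * π * I) by field_simp [ofReal_ne_zero.mpr hL.ne'],
    exp_int_mul_two_pi_mul_I, sub_self, zero_div]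

theorem sum_range_exp_eq_ite {N : ℕ} (hN : N ≠ 0) (d : ℤ) :
    ∑ t ∈ range N, exp (2 * π * I * d * t / N) = if (N : ℤ) ∣ d then (N : ℂ) else 0 := by
  have hζ := Complex.isPrimitiveRoot_exp N hN
  set ζ := exp (2 * π * I / N)
  have hterm : ∀ t : ℕ, exp (2 * π * I * d * t / N) = (ζ ^ d) ^ t := by
    intro t
    rw [← zpow_natCast, ← zpow_mul, ← exp_int_mul]
    push_cast
    ring_nf
  simp_rw [hterm]
  split_ifs with hd
  · simp [(hζ.zpow_eq_one_iff_dvd d).mpr hd]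
  · have hN1 : (ζ ^ d) ^ N = 1 := by
      rw [← zpow_natCast, ← zpow_mul, mul_comm, zpow_mul, zpow_natCast, hζ.pow_eq_one, one_zpow]
    rw [geom_sum_eq (mt (hζ.zpow_eq_one_iff_dvd d).mp hd), hN1, sub_self, zero_div]

section GridWave

variable {ι : Type*} [Fintype ι] [DecidableEq ι] {N : ℕ}

def gridWave (N : ℕ) (n : ι → ℤ) : EuclideanSpace ℂ (ι → Fin N) :=
  WithLp.toLp 2 fun m =>
    ((√N ^ Fintype.card ι : ℝ) : ℂ)⁻¹ * exp (2 * π * I * (∑ i, (n i : ℂ) * (m i : ℕ)) / N)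

theorem inner_gridWave (hN : N ≠ 0) (n n' : ι → ℤ) :
    inner ℂ (gridWave N n) (gridWave N n') =
      if ∀ i, (n i : ZMod N) = n' i then 1 else 0 := by
  have hterm : ∀ m : ι → Fin N, gridWave N n' m * star (gridWave N n m) =
      ((N : ℂ) ^ Fintype.card ι)⁻¹ *
        ∏ i, exp (2 * π * I * ((n' i - n i : ℤ) : ℂ) * (m i : ℕ) / N) := by
    intro m
    simp only [gridWave, RCLike.star_def, map_mul, map_inv₀, conj_ofReal, ← exp_conj, map_div₀,
      map_sum, conj_I, map_natCast, map_intCast, map_ofNat]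
    rw [mul_mul_mul_comm, ← exp_add, ← exp_sum, ← mul_inv, ← ofReal_mul, ← mul_pow,
      Real.mul_self_sqrt (Nat.cast_nonneg N)]
    push_cast
    congr 2
    simp only [Finset.mul_sum, Finset.sum_div, ← Finset.sum_add_distrib]
    refine Finset.sum_congr rfl fun i _ => ?_
    ring
  rw [EuclideanSpace.inner_toLp_toLp, dotProduct]
  simp only [Pi.star_apply, hterm]
  rw [← Finset.mul_sum, ← Fintype.prod_sum fun i (t : Fin N) =>
    exp (2 * π * I * ((n' i - n i : ℤ) : ℂ) * (t : ℕ) / N)]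
  have h1d : ∀ i, ∑ t : Fin N, exp (2 * π * I * ((n' i - n i : ℤ) : ℂ) * (t : ℕ) / N) =
      if (N : ℤ) ∣ n' i - n i then (N : ℂ) else 0 := fun i => by
    rw [Fin.sum_univ_eq_sum_range (fun t => exp (2 * π * I * ((n' i - n i : ℤ) : ℂ) * t / N)),
      sum_range_exp_eq_ite hN]
  simp only [h1d, ← ZMod.intCast_eq_intCast_iff_dvd_sub]
  rw [Finset.prod_ite_zero, Finset.prod_const, Finset.card_univ]
  simp only [Finset.mem_univ, true_implies, mul_ite, mul_zero]
  rw [inv_mul_cancel₀ (by exact_mod_cast pow_ne_zero _ hN)]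

theorem orthonormal_gridWave (hN : N ≠ 0) {S : Set (ι → ℤ)}
    (hS : S.InjOn fun n i => (n i : ZMod N)) :
    Orthonormal ℂ fun n : S => gridWave N (n : ι → ℤ) := by
  rw [orthonormal_iff_ite]
  rintro ⟨n, hn⟩ ⟨n', hn'⟩
  rw [inner_gridWave hN]
  exact if_congr ⟨fun h => Subtype.ext (hS hn hn' (funext h)), fun h _ => by rw [h]⟩ rfl rfl

end GridWave

namespace TFW

theorem ek_mul_conj_ek {L : ℝ} (hL : 0 < L) (n m : Fin 3 → ℤ) (x : Fin 3 → ℝ) :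
    ek L n x * conj (ek L m x) =
      ((L ^ 3)⁻¹ : ℝ) * ∏ i, exp (2 * π * I * (n i - m i : ℤ) * x i / L) := by
  simp only [ek, map_mul, conj_ofReal, ← exp_conj, Real.rpow_neg (pow_pos hL 3).le,
    ← Real.sqrt_eq_rpow]
  rw [mul_mul_mul_comm, ← ofReal_mul, ← mul_inv, Real.mul_self_sqrt (pow_pos hL 3).le, ← exp_add,
    ← exp_sum]
  congr 2
  simp only [map_mul, map_sum, conj_I, conj_ofReal, map_intCast, Finset.mul_sum,
    ← Finset.sum_add_distrib]
  refine Finset.sum_congr rfl fun i _ => ?_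
  push_cast
  field_simp
  ring

theorem integral_ek_mul_conj_ek {L : ℝ} (hL : 0 < L) (n m : Fin 3 → ℤ) :
    ∫ x in Gam L, ek L n x * conj (ek L m x) = if n = m then 1 else 0 := by
  simp_rw [ek_mul_conj_ek hL, integral_const_mul]
  rw [Gam, setIntegral_univ_pi_prod (fun _ => Set.Ico 0 L)
    fun i t => exp (2 * π * I * (n i - m i : ℤ) * t / L)]
  simp only [integral_Ico_exp_eq_ite hL, sub_eq_zero, Finset.prod_ite_zero, Finset.mem_univ,
    true_implies, funext_iff]
  split_ifs
  · rw [Finset.prod_const, Finset.card_univ, Fintype.card_fin]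
    push_cast
    exact inv_mul_cancel₀ (pow_ne_zero 3 (ofReal_ne_zero.mpr hL.ne'))
  · exact mul_zero _

theorem integral_ek {L : ℝ} (hL : 0 < L) (n : Fin 3 → ℤ) :
    ∫ x in Gam L, ek L n x = if n = 0 then (((L ^ 3) ^ (1 / 2 : ℝ) : ℝ) : ℂ) else 0 := by
  have hek0 : ∀ x, conj (ek L 0 x) = (((L ^ 3) ^ (1 / 2 : ℝ) : ℝ) : ℂ)⁻¹ := fun x => by
    simp [ek, Real.rpow_neg (pow_pos hL 3).le]
  have h := integral_ek_mul_conj_ek hL n 0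
  simp only [hek0, integral_mul_const] at h
  have hc : (((L ^ 3) ^ (1 / 2 : ℝ) : ℝ) : ℂ) ≠ 0 := by
    exact_mod_cast (Real.rpow_pos_of_pos (pow_pos hL 3) _).ne'
  rw [mul_inv_eq_iff_eq_mul₀ hc] at h
  rw [h]
  split_ifs <;> simp

theorem continuous_ek (L : ℝ) (n : Fin 3 → ℤ) : Continuous (ek L n) := by
  unfold ek
  fun_prop

theorem _root_.Continuous.integrableOn_Gam {L : ℝ} {f : (Fin 3 → ℝ) → ℂ} (hf : Continuous f) :
    IntegrableOn f (Gam L) :=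
  (hf.integrableOn_Icc (a := 0) (b := fun _ => L)).mono_set
    fun _ hx => ⟨fun i => (hx i trivial).1, fun i => (hx i trivial).2.le⟩

theorem integral_norm_sum_ek_sq {L : ℝ} (hL : 0 < L) (S : Finset (Fin 3 → ℤ))
    (a : (Fin 3 → ℤ) → ℂ) :
    ∫ x in Gam L, ‖∑ n ∈ S, a n * ek L n x‖ ^ 2 = ∑ n ∈ S, ‖a n‖ ^ 2 := by
  apply ofReal_injective
  have hint : ∀ n m, IntegrableOn (fun x => a n * conj (a m) * (ek L n x * conj (ek L m x)))
      (Gam L) := fun n m => by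
    refine Continuous.integrableOn_Gam ?_
    have := continuous_ek L n
    have := continuous_ek L m
    fun_prop
  rw [← integral_complex_ofReal]
  push_cast
  simp_rw [← mul_conj', map_sum, map_mul, Finset.sum_mul_sum]
  simp_rw [mul_mul_mul_comm (a _) (ek L _ _)]
  rw [integral_finsetSum _ fun n _ => integrable_finsetSum _ fun m _ => hint n m]
  simp_rw [integral_finsetSum _ fun m _ => hint _ m, integral_const_mul,
    integral_ek_mul_conj_ek hL, mul_ite, mul_one, mul_zero, Finset.sum_ite_eq]
  exact Finset.sum_congr rfl fun n hn => if_pos hn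

theorem integral_norm_truncInterp_sq {L : ℝ} (hL : 0 < L) (Ng Nc : ℕ) (φ : (Fin 3 → ℝ) → ℂ) :
    ∫ x in Gam L, ‖truncInterp L Ng Nc φ x‖ ^ 2 =
      L ^ 3 * ∑ n ∈ ball L (2 * Nc), ‖dft L Ng φ n‖ ^ 2 := by
  simp only [truncInterp, Finset.mul_sum, ← mul_assoc]
  rw [integral_norm_sum_ek_sq hL]
  simp only [norm_mul, mul_pow, norm_real, Real.norm_eq_abs, sq_abs, ← Real.sqrt_eq_rpow,
    Real.sq_sqrt (pow_pos hL 3).le]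

theorem integral_interp {L : ℝ} (hL : 0 < L) {Ng : ℕ} (hNg : Ng ≠ 0) (φ : (Fin 3 → ℝ) → ℂ) :
    ∫ x in Gam L, interp L Ng φ x = L ^ 3 * dft L Ng φ 0 := by
  have hcont : ∀ n, Continuous fun x => dft L Ng φ n * ek L n x :=
    fun n => continuous_const.mul (continuous_ek L n)
  have h0 : (0 : Fin 3 → ℤ) ∈ interpModes Ng := by
    simp only [interpModes, cube, Fintype.mem_piFinset, Finset.mem_Icc, Pi.zero_apply]
    omega
  simp only [interp]
  rw [integral_const_mul, integral_finsetSum _ fun n _ => (hcont n).integrableOn_Gam]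
  simp only [integral_const_mul, integral_ek hL, mul_ite, mul_zero, Finset.sum_ite_eq', if_pos h0]
  rw [← mul_assoc, mul_comm, ← mul_assoc, ← ofReal_mul, ← Real.sqrt_eq_rpow,
    Real.mul_self_sqrt (pow_pos hL 3).le, ofReal_pow]

theorem dft_zero (L : ℝ) (Ng : ℕ) (φ : (Fin 3 → ℝ) → ℂ) :
    dft L Ng φ 0 = ((Ng : ℂ) ^ 3)⁻¹ * ∑ m, φ (gridPt L Ng m) := by
  simp [dft]

theorem injOn_cube_intCast_zmod {R : ℕ} {Ng : ℕ} (h : 2 * R < Ng) :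
    Set.InjOn (fun n i => (n i : ZMod Ng)) (cube R : Set (Fin 3 → ℤ)) := by
  intro n hn n' hn' hnn'
  simp only [Finset.mem_coe, cube, Fintype.mem_piFinset, Finset.mem_Icc] at hn hn'
  funext i
  have hdvd := (ZMod.intCast_eq_intCast_iff_dvd_sub _ _ _).mp (congrFun hnn' i)
  have := hn i
  have := hn' i
  have := Int.eq_zero_of_abs_lt_dvd hdvd (by rw [abs_lt]; omega)
  omega

def gridValues (L : ℝ) (Ng : ℕ) (φ : (Fin 3 → ℝ) → ℂ) : EuclideanSpace ℂ (Fin 3 → Fin Ng) :=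
  WithLp.toLp 2 fun m => φ (gridPt L Ng m)

theorem dft_eq_inner_gridWave {L : ℝ} (hL : L ≠ 0) (Ng : ℕ) (φ : (Fin 3 → ℝ) → ℂ)
    (n : Fin 3 → ℤ) :
    dft L Ng φ n = ((√Ng ^ 3 : ℝ) : ℂ)⁻¹ * inner ℂ (gridWave Ng n) (gridValues L Ng φ) := by
  have hphase : ∀ m : Fin 3 → Fin Ng,
      -(I * ((2 * π / L : ℝ) : ℂ) * ∑ i, (n i : ℂ) * ((gridPt L Ng m i : ℝ) : ℂ)) =
        conj (2 * π * I * (∑ i, (n i : ℂ) * (m i : ℕ)) / Ng) := fun m => by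
    simp only [gridPt, map_div₀, map_mul, map_sum, conj_I, conj_ofReal, map_intCast, map_natCast,
      map_ofNat, Finset.mul_sum, Finset.sum_div, ← Finset.sum_neg_distrib]
    refine Finset.sum_congr rfl fun i _ => ?_
    push_cast
    field_simp [ofReal_ne_zero.mpr hL]
  have hnorm : ((√Ng ^ 3 : ℝ) : ℂ)⁻¹ * ((√Ng ^ 3 : ℝ) : ℂ)⁻¹ = ((Ng : ℂ) ^ 3)⁻¹ := by
    rw [← mul_inv, ← ofReal_mul, ← mul_pow, Real.mul_self_sqrt (Nat.cast_nonneg _)]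
    push_cast
    rfl
  simp only [dft, hphase, gridWave, gridValues, EuclideanSpace.inner_toLp_toLp, dotProduct,
    Pi.star_apply, RCLike.star_def]
  simp only [map_mul, map_inv₀, conj_ofReal, ← exp_conj, Finset.mul_sum, Fintype.card_fin]
  refine Finset.sum_congr rfl fun m _ => ?_
  rw [← hnorm]
  ring

theorem sum_norm_dft_sq_le {L : ℝ} (hL : L ≠ 0) {Ng : ℕ} (hNg : Ng ≠ 0)
    {S : Finset (Fin 3 → ℤ)} (hS : (S : Set (Fin 3 → ℤ)).InjOn fun n i => (n i : ZMod Ng))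
    (φ : (Fin 3 → ℝ) → ℂ) :
    ∑ n ∈ S, ‖dft L Ng φ n‖ ^ 2 ≤ ((Ng : ℝ) ^ 3)⁻¹ * ∑ m, ‖φ (gridPt L Ng m)‖ ^ 2 := by
  have hbessel := (orthonormal_gridWave hNg hS).sum_inner_products_le (gridValues L Ng φ)
    (s := Finset.univ)
  rw [← Finset.sum_subtype S (fun _ => Finset.mem_coe.symm)
      fun n => ‖inner ℂ (gridWave Ng n) (gridValues L Ng φ)‖ ^ 2,
    EuclideanSpace.norm_sq_eq] at hbessel
  have hnorm : ‖((√Ng ^ 3 : ℝ) : ℂ)⁻¹‖ ^ 2 = ((Ng : ℝ) ^ 3)⁻¹ := by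
    rw [norm_inv, norm_real, Real.norm_eq_abs, abs_of_nonneg (by positivity), inv_pow, ← pow_mul,
      mul_comm, pow_mul, Real.sq_sqrt (Nat.cast_nonneg _)]
  simp only [dft_eq_inner_gridWave hL, norm_mul, mul_pow, hnorm, ← Finset.mul_sum]
  gcongr
  exact hbessel

end TFW

theorem stmt6_general (L : ℝ) (hL : 0 < L) (Nc Ng : ℕ) (hNg : 4 * Nc + 1 ≤ Ng)
    (V : (Fin 3 → ℝ) → ℝ) :
    Real.sqrt (∫ x in TFW.Gam L, ‖TFW.truncInterp L Ng Nc (fun y => (V y : ℂ)) x‖ ^ 2) ≤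
      Real.sqrt ((∫ x in TFW.Gam L, TFW.interp L Ng (fun y => ((V y ^ 2 : ℝ) : ℂ)) x).re) := by
  have hball : TFW.ball L (2 * Nc) ⊆ TFW.cube (2 * Nc : ℕ) := Finset.filter_subset _ _
  have hbessel := TFW.sum_norm_dft_sq_le hL.ne' (Ng := Ng) (by omega)
    ((TFW.injOn_cube_intCast_zmod (R := 2 * Nc) (by omega)).mono hball) fun y => (V y : ℂ)
  rw [TFW.integral_norm_truncInterp_sq hL, TFW.integral_interp hL (by omega), TFW.dft_zero]
  refine Real.sqrt_le_sqrt ((mul_le_mul_of_nonneg_left hbessel (by positivity)).trans_eq ?_)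
  simp only [norm_real, Real.norm_eq_abs, sq_abs]
  norm_cast
  rw [← ofReal_natCast, ← ofReal_inv, ← ofReal_mul, ← ofReal_mul, ofReal_re]

/-- ‖Π_{2N_c}(I_{N_g}(V))‖_{L²} ≤ (∫ I_{N_g}(|V|²))^{1/2}. -/
theorem stmt6 (L : ℝ) (hL : 0 < L) (Nc Ng : ℕ) (hNg : 4 * Nc + 1 ≤ Ng) (hodd : Odd Ng)
    (V : (Fin 3 → ℝ) → ℝ) (hVcont : Continuous V)
    (hVper : ∀ (x : Fin 3 → ℝ) (p : Fin 3 → ℤ), V (fun i => x i + L * (p i : ℝ)) = V x) :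
    Real.sqrt (∫ x in TFW.Gam L, ‖TFW.truncInterp L Ng Nc (fun y => (V y : ℂ)) x‖ ^ 2) ≤
      Real.sqrt ((∫ x in TFW.Gam L, TFW.interp L Ng (fun y => ((V y ^ 2 : ℝ) : ℂ)) x).re) :=
  stmt6_general L hL Nc Ng hNg V
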